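/- For α ∈ (0, π], the supremum over t > 0 and c > 0 of (t + c)/|t·e^{iα} − c| equals 1/sin(α/2). -/

import Mathlib

/-!
Writing `s = sin (α/2)` and `k = cos (α/2)`, the law of cosines together with the half-angle
formula gives `‖t e^{iα} - c‖² = ((t + c) s)² + ((t - c) k)²`. Hence `(t + c) s ≤ ‖t e^{iα} - c‖`,
with equality when `t = c`, so the ratio is bounded by `1 / s` and attains it at `t = c = 1`.
-/

open Complex

theorem norm_ofReal_mul_exp_sub_sq (α t c : ℝ) :
    ‖(t * exp (α * I) - c : ℂ)‖ ^ 2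
      = ((t + c) * Real.sin (α / 2)) ^ 2 + ((t - c) * Real.cos (α / 2)) ^ 2 := by
  have hα : α = 2 * (α / 2) := by ring
  rw [Complex.sq_norm, normSq_apply]
  simp only [sub_re, sub_im, mul_re, mul_im, ofReal_re, ofReal_im, exp_ofReal_mul_I_re,
    exp_ofReal_mul_I_im]
  rw [hα, Real.cos_two_mul, Real.sin_two_mul, show 2 * (α / 2) / 2 = α / 2 by ring]
  linear_combination (t ^ 2 * (4 * Real.cos (α / 2) ^ 2 - 1) - 2 * t * c - c ^ 2) *
    Real.sin_sq_add_cos_sq (α / 2)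

theorem mul_sin_half_le_norm_ofReal_mul_exp_sub (α t c : ℝ) :
    (t + c) * Real.sin (α / 2) ≤ ‖(t * exp (α * I) - c : ℂ)‖ := by
  have hsq : ((t + c) * Real.sin (α / 2)) ^ 2 ≤ ‖(t * exp (α * I) - c : ℂ)‖ ^ 2 := by
    rw [norm_ofReal_mul_exp_sub_sq]
    exact le_add_of_nonneg_right (sq_nonneg _)
  exact (le_abs_self _).trans (abs_le_of_sq_le_sq hsq (norm_nonneg _))

theorem norm_ofReal_mul_exp_sub_self {α c : ℝ} (hc : 0 ≤ c) (hs : 0 ≤ Real.sin (α / 2)) :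
    ‖(c * exp (α * I) - c : ℂ)‖ = 2 * c * Real.sin (α / 2) := by
  rw [← sq_eq_sq₀ (norm_nonneg _) (by positivity), norm_ofReal_mul_exp_sub_sq]
  ring

theorem add_div_norm_ofReal_mul_exp_sub_le {α t c : ℝ} (ht : 0 < t) (hc : 0 < c)
    (hs : 0 < Real.sin (α / 2)) :
    (t + c) / ‖(t * exp (α * I) - c : ℂ)‖ ≤ 1 / Real.sin (α / 2) := by
  have hle := mul_sin_half_le_norm_ofReal_mul_exp_sub α t c
  have hnorm : 0 < ‖(t * exp (α * I) - c : ℂ)‖ := (mul_pos (add_pos ht hc) hs).trans_le hle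
  rwa [div_le_div_iff₀ hnorm hs, one_mul]

theorem ptolemy_ratio_sector_sup (α : ℝ) (hα : α ∈ Set.Ioc 0 Real.pi) :
    sSup {p : ℝ | ∃ t > (0 : ℝ), ∃ c > (0 : ℝ),
        p = (t + c) / ‖(t * Complex.exp (α * Complex.I) - c : ℂ)‖}
      = 1 / Real.sin (α / 2) := by
  have hsin : 0 < Real.sin (α / 2) :=
    Real.sin_pos_of_pos_of_lt_pi (by linarith [hα.1]) (by linarith [hα.2, Real.pi_pos])
  refine IsGreatest.csSup_eq ⟨⟨1, one_pos, 1, one_pos, ?_⟩, ?_⟩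
  · rw [norm_ofReal_mul_exp_sub_self zero_le_one hsin.le]
    field_simp
    norm_num
  · rintro _ ⟨t, ht, c, hc, rfl⟩
    exact add_div_norm_ofReal_mul_exp_sub_le ht hc hsin
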